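/- arXiv:2112.12594 — 2 statements merged into one kernel-verified Lean document; each statement's English description precedes it below -/
import Mathlib

section
/- Consider the restricted Nash response objective over maximizer strategies: f(σ) = p·u(σ, σ_F) + (1−p)·min_{σ'} u(σ, σ'), for a fixed opponent strategy σ_F and parameter p ∈ [0,1]. If σ^R maximizes f, then f(σ^R) ≥ p·u(σ^{NE}_max, σ_F) + (1−p)·v ≥ v, where v is the game value; hence p·G(σ^R, σ_F) ≥ (1−p)·E(σ^R), i.e., E(σ^R) ≤ G(σ^R, σ_F)·p/(1−p) when p < 1. -/
/-- Restricted Nash response guarantee: with objective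
`f σ = p * u σ σF + (1 - p) * bmin σ` where `bmin σ = min_{σ'} u σ σ'`, and
`σR` maximizing `f`, we get `f σR ≥ p * u σNE σF + (1 - p) * v ≥ v`, hence
`p * G(σR,σF) ≥ (1 - p) * E(σR)`, i.e.
`E(σR) ≤ G(σR,σF) * p / (1 - p)` when `p < 1`. -/
theorem rnr_exploitability_bound {A B : Type*}
    (u : A → B → ℝ) (v : ℝ) (σF : B) (p : ℝ) (hp0 : 0 ≤ p) (hp1 : p ≤ 1)
    (bmin : A → ℝ)
    (hbmin_le : ∀ (σ : A) (τ : B), bmin σ ≤ u σ τ)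
    (hbmin_att : ∀ σ : A, ∃ τ : B, bmin σ = u σ τ)
    (σNE : A) (hNE_maximin : bmin σNE ≥ v)
    (σR : A)
    (hmax : ∀ σ : A, p * u σ σF + (1 - p) * bmin σ
              ≤ p * u σR σF + (1 - p) * bmin σR) :
    (p * u σR σF + (1 - p) * bmin σR ≥ p * u σNE σF + (1 - p) * v) ∧
    (p * u σR σF + (1 - p) * bmin σR ≥ v) ∧
    (p * (u σR σF - v) ≥ (1 - p) * (v - bmin σR)) ∧
    (p < 1 → v - bmin σR ≤ (u σR σF - v) * p / (1 - p)) := by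
  have h1 : p * u σR σF + (1 - p) * bmin σR ≥ p * u σNE σF + (1 - p) * v := by
    have := hmax σNE
    nlinarith [hNE_maximin]
  have h2 : p * u σR σF + (1 - p) * bmin σR ≥ v := by
    have huNE : u σNE σF ≥ v := le_trans hNE_maximin (hbmin_le σNE σF)
    nlinarith
  have h3 : p * (u σR σF - v) ≥ (1 - p) * (v - bmin σR) := by nlinarith
  refine ⟨h1, h2, h3, fun hlt => ?_⟩
  rw [le_div_iff₀ (by linarith : (0:ℝ) < 1 - p)]
  nlinarith
end

section
/- With the restricted Nash response objective f(σ) = p·u(σ, σ_F) + (1−p)·min_{σ'} u(σ, σ') and σ^R maximizing f, it also holds that u(σ^R, σ_F) ≥ v, i.e., the restricted Nash response achieves at least the game value against the modeled opponent. -/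
/-- The restricted Nash response achieves at least the game value against the
modeled opponent: with `f σ = p * u σ σF + (1 - p) * min_{σ'} u σ σ'` and `σR`
maximizing `f`, we have `u σR σF ≥ v`. -/
theorem rnr_gain_nonneg {A B : Type*}
    (u : A → B → ℝ) (v : ℝ) (σF : B) (p : ℝ) (hp0 : 0 ≤ p) (hp1 : p ≤ 1)
    (bmin : A → ℝ)
    (hbmin_le : ∀ (σ : A) (τ : B), bmin σ ≤ u σ τ)
    (hbmin_att : ∀ σ : A, ∃ τ : B, bmin σ = u σ τ)
    (σNE : A) (hNE_maximin : bmin σNE ≥ v)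
    (σR : A)
    (hmax : ∀ σ : A, p * u σ σF + (1 - p) * bmin σ
              ≤ p * u σR σF + (1 - p) * bmin σR) :
    u σR σF ≥ v := by
  have h1 := hmax σNE
  have h2 := hbmin_le σNE σF
  have h3 := hbmin_le σR σF
  nlinarith
end
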